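/- Given fixed time allocations 0 ≤ t_1 ≤ ... ≤ t_K, the powers p_1* = θ_1 t_1 and p_k* = θ_1 t_1 + Σ_{i=2}^k θ_i (t_i − t_{i−1}) are the unique feasible relay powers achieving the maximum total relay power Σ_k N_k p_k: if a feasible power vector (p̄_1,...,p̄_K) satisfies Σ_k N_k p̄_k = Σ_k N_k p_k*, then p̄_k = p_k* for all k. -/

import Mathlib

/-!
Local downward incentive compatibility bounds each power by its predecessor plus the rent
`θ (k+1) * (t (k+1) - t k)`, and individual rationality of the lowest type starts the induction,
so `p̄ ≤ p*` componentwise. A positively weighted sum of nonnegative gaps `p* - p̄` vanishes only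
if every gap does.
-/

open Finset

noncomputable def pstar (θ t : ℕ → ℝ) (k : ℕ) : ℝ :=
  θ 1 * t 1 + ∑ i ∈ Icc 2 k, θ i * (t i - t (i - 1))

theorem pstar_one (θ t : ℕ → ℝ) : pstar θ t 1 = θ 1 * t 1 := by
  simp [pstar]

theorem pstar_succ (θ t : ℕ → ℝ) {k : ℕ} (hk : 1 ≤ k) :
    pstar θ t (k + 1) = pstar θ t k + θ (k + 1) * (t (k + 1) - t k) := by
  rw [pstar, pstar, sum_Icc_succ_top (by omega), Nat.add_sub_cancel, add_assoc]

theorem le_pstar_of_ir_of_ic {K : ℕ} {θ t p : ℕ → ℝ}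
    (hIR : θ 1 * t 1 - p 1 ≥ 0)
    (hIC : ∀ k, 1 ≤ k → k + 1 ≤ K →
      θ (k + 1) * t (k + 1) - p (k + 1) ≥ θ (k + 1) * t k - p k) :
    ∀ k, 1 ≤ k → k ≤ K → p k ≤ pstar θ t k := by
  intro k hk
  induction k, hk using Nat.le_induction with
  | base => intro; rw [pstar_one]; linarith
  | succ k hk ih =>
    intro hkK
    have := hIC k hk hkK
    rw [pstar_succ θ t hk]
    linarith [ih (by omega)]

theorem pstar_unique_general
    (K : ℕ) (θ t pbar N : ℕ → ℝ)
    (hN : ∀ k, 1 ≤ k → k ≤ K → 1 ≤ N k)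
    (hIC : ∀ k j, 1 ≤ k → k ≤ K → 1 ≤ j → j ≤ K →
      θ k * t k - pbar k ≥ θ k * t j - pbar j)
    (hIR : ∀ k, 1 ≤ k → k ≤ K → θ k * t k - pbar k ≥ 0)
    (hsum : ∑ k ∈ Finset.Icc 1 K, N k * pbar k =
      ∑ k ∈ Finset.Icc 1 K,
        N k * (θ 1 * t 1 + ∑ i ∈ Finset.Icc 2 k, θ i * (t i - t (i - 1)))) :
    ∀ k, 1 ≤ k → k ≤ K →
      pbar k = θ 1 * t 1 + ∑ i ∈ Finset.Icc 2 k, θ i * (t i - t (i - 1)) := by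
  have hle : ∀ k ∈ Icc 1 K, N k * pbar k ≤ N k * pstar θ t k := by
    intro k hk
    obtain ⟨hk1, hkK⟩ := mem_Icc.1 hk
    have hp_le := le_pstar_of_ir_of_ic (hIR 1 le_rfl (by omega))
      (fun j hj hjK => hIC (j + 1) j (by omega) hjK hj (by omega)) k hk1 hkK
    exact mul_le_mul_of_nonneg_left hp_le (by linarith [hN k hk1 hkK])
  intro k hk1 hkK
  have hNk : N k ≠ 0 := by linarith [hN k hk1 hkK]
  exact mul_left_cancel₀ hNk ((sum_eq_sum_iff_of_le hle).1 hsum k (mem_Icc.2 ⟨hk1, hkK⟩))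

/-- The powers `p* k` are the unique feasible relay powers achieving the maximum total
relay power: any feasible `p̄` with the same total weighted power equals `p*`. -/
theorem pstar_unique
    (K : ℕ) (hK : 1 ≤ K) (θ t pbar N : ℕ → ℝ)
    (hθpos : ∀ k, 1 ≤ k → k ≤ K → 0 < θ k)
    (hθmono : ∀ i j, 1 ≤ i → i < j → j ≤ K → θ i < θ j)
    (hN : ∀ k, 1 ≤ k → k ≤ K → 1 ≤ N k)
    (ht0 : 0 ≤ t 1)
    (htmono : ∀ i j, 1 ≤ i → i ≤ j → j ≤ K → t i ≤ t j)
    (hp : ∀ k, 1 ≤ k → k ≤ K → 0 ≤ pbar k)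
    (hIC : ∀ k j, 1 ≤ k → k ≤ K → 1 ≤ j → j ≤ K →
      θ k * t k - pbar k ≥ θ k * t j - pbar j)
    (hIR : ∀ k, 1 ≤ k → k ≤ K → θ k * t k - pbar k ≥ 0)
    (hsum : ∑ k ∈ Finset.Icc 1 K, N k * pbar k =
      ∑ k ∈ Finset.Icc 1 K,
        N k * (θ 1 * t 1 + ∑ i ∈ Finset.Icc 2 k, θ i * (t i - t (i - 1)))) :
    ∀ k, 1 ≤ k → k ≤ K →
      pbar k = θ 1 * t 1 + ∑ i ∈ Finset.Icc 2 k, θ i * (t i - t (i - 1)) :=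
  pstar_unique_general K θ t pbar N hN hIC hIR hsum
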